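/- Suppose on the interval [t-τ, t] the signals satisfy ẏ(σ) = Φ + α u(σ) where Φ is a constant. Then the algebraic estimator F_est(t) = -(6/τ³) ∫_{t-τ}^{t} [(τ - 2σ')y(t-τ+σ') + α σ'(τ - σ')u(t-τ+σ')] dσ' (with σ' the shifted time variable running from 0 to τ) recovers Φ exactly: F_est(t) = Φ. -/

import Mathlib

/-!
Weighting the model `ẏ = Φ + α u` by the modulating function `s (τ - s)`, which vanishes at both
ends of the window, and integrating by parts moves the derivative off the unknown `y`:
`∫ (τ - 2s) y + s (τ - s) ẏ = 0`. Substituting `ẏ = Φ + α u` leaves exactly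
`-Φ ∫ s (τ - s) = -Φ τ³ / 6`.
-/

open intervalIntegral

theorem integral_mul_sub_self (τ : ℝ) : ∫ s in (0:ℝ)..τ, s * (τ - s) = τ ^ 3 / 6 := by
  have hpoly : ∀ s : ℝ, s * (τ - s) = τ * s - s ^ 2 := fun s => by ring
  simp_rw [hpoly]
  rw [integral_sub ((by fun_prop : Continuous fun s : ℝ => τ * s).intervalIntegrable _ _)
    ((by fun_prop : Continuous fun s : ℝ => s ^ 2).intervalIntegrable _ _),
    integral_const_mul, integral_id, integral_pow]
  ring

section ByParts

variable {τ : ℝ} {g g' : ℝ → ℝ}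

theorem integral_by_parts_mul_sub_self (hg : ∀ s ∈ Set.uIcc 0 τ, HasDerivAt g (g' s) s)
    (hg' : IntervalIntegrable g' MeasureTheory.volume 0 τ) :
    ∫ s in (0:ℝ)..τ, ((τ - 2 * s) * g s + s * (τ - s) * g' s) = 0 := by
  have hw : ∀ s ∈ Set.uIcc 0 τ, HasDerivAt (fun s => s * (τ - s)) (τ - 2 * s) s := fun s _ =>
    ((hasDerivAt_id' s).fun_mul ((hasDerivAt_id' s).const_sub τ)).congr_deriv (by ring)
  rw [integral_deriv_mul_eq_sub hw hg ((by fun_prop : Continuous _).intervalIntegrable _ _) hg']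
  ring

theorem intervalIntegrable_by_parts_mul_sub_self
    (hg : ∀ s ∈ Set.uIcc 0 τ, HasDerivAt g (g' s) s)
    (hg' : IntervalIntegrable g' MeasureTheory.volume 0 τ) :
    IntervalIntegrable (fun s => (τ - 2 * s) * g s + s * (τ - s) * g' s)
      MeasureTheory.volume 0 τ := by
  have hg_cont : ContinuousOn g (Set.uIcc 0 τ) := fun s hs =>
    (hg s hs).continuousAt.continuousWithinAt
  exact ((continuousOn_const.sub (continuousOn_const.mul continuousOn_id)).mul
    hg_cont).intervalIntegrable.add (hg'.continuousOn_mul (by fun_prop))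

end ByParts

theorem algebraic_estimator_exact
    (τ α Φ t : ℝ) (hτ : 0 < τ)
    (y u : ℝ → ℝ) (hu : Continuous u)
    (hder : ∀ σ ∈ Set.Icc (t - τ) t, HasDerivAt y (Φ + α * u σ) σ) :
    -(6 / τ ^ 3) *
      (∫ s in (0:ℝ)..τ,
        ((τ - 2 * s) * y (t - τ + s) + α * s * (τ - s) * u (t - τ + s)))
      = Φ := by
  have hy : ∀ s ∈ Set.uIcc 0 τ,
      HasDerivAt (fun s => y (t - τ + s)) (Φ + α * u (t - τ + s)) s := by
    intro s hs
    rw [Set.uIcc_of_le hτ.le] at hs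
    exact (hder _ ⟨by linarith [hs.1], by linarith [hs.2]⟩).comp_const_add _ _
  have hy' : IntervalIntegrable (fun s => Φ + α * u (t - τ + s)) MeasureTheory.volume 0 τ :=
    (by fun_prop : Continuous _).intervalIntegrable _ _
  have hsplit : ∀ s, (τ - 2 * s) * y (t - τ + s) + α * s * (τ - s) * u (t - τ + s) =
      ((τ - 2 * s) * y (t - τ + s) + s * (τ - s) * (Φ + α * u (t - τ + s))) -
        Φ * (s * (τ - s)) := fun s => by ring
  simp_rw [hsplit]
  rw [integral_sub (intervalIntegrable_by_parts_mul_sub_self hy hy')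
      ((by fun_prop : Continuous _).intervalIntegrable _ _),
    integral_by_parts_mul_sub_self hy hy', integral_const_mul, integral_mul_sub_self]
  field_simp
  ring
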